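/- arXiv:1311.6084 — 4 statements merged into one kernel-verified Lean document; each statement's English description precedes it below -/
import Mathlib

section
/- Let n ≥ 4 and define h(x) = (1+|x|²)^{-(2n-5)/2} and σ(x) = (1+|x|²)^{(n-3)/2} on ℝⁿ. Then σ(x)·div(h(x)∇σ(x)) ≥ 0 for all x ∈ ℝⁿ. -/
/-!
Since `∇σ = (n-3) (1+|x|²)^{(n-5)/2} x`, the field `h ∇σ` is the radial field
`(n-3) (1+|x|²)^{-n/2} x`. The divergence of `(1+|x|²)^q x` is
`(1+|x|²)^{q-1} (n (1+|x|²) + 2q|x|²)`, and the exponent `q = -n/2` is exactly the one for which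
the `|x|²` terms cancel, leaving `div(h ∇σ) = n(n-3) (1+|x|²)^{-n/2-1} ≥ 0`; and `σ > 0`.
-/

open Real

/-- The partial derivative of `f` in the `i`-th coordinate direction. -/
noncomputable def pderiv' {n : ℕ} (f : EuclideanSpace ℝ (Fin n) → ℝ)
    (i : Fin n) (x : EuclideanSpace ℝ (Fin n)) : ℝ :=
  fderiv ℝ f x (EuclideanSpace.single i (1 : ℝ))

theorem hasFDerivAt_one_add_norm_sq_rpow {E : Type*} [NormedAddCommGroup E]
    [InnerProductSpace ℝ E] (p : ℝ) (x : E) :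
    HasFDerivAt (fun y : E => (1 + ‖y‖ ^ 2) ^ p)
      ((p * (1 + ‖x‖ ^ 2) ^ (p - 1)) • (2 • innerSL ℝ x)) x := by
  have hpos : 0 < 1 + ‖x‖ ^ 2 := by positivity
  have hrpow :
      HasDerivAt (fun t : ℝ => t ^ p) (p * (1 + ‖x‖ ^ 2) ^ (p - 1)) (1 + ‖x‖ ^ 2) := by
    simpa [mul_comm] using hasDerivAt_rpow_const (p := p) (Or.inl hpos.ne')
  exact hrpow.comp_hasFDerivAt x ((hasStrictFDerivAt_norm_sq x).hasFDerivAt.const_add 1)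

variable {n : ℕ}

theorem pderiv'_const_mul (c : ℝ) (f : EuclideanSpace ℝ (Fin n) → ℝ) (i : Fin n)
    (x : EuclideanSpace ℝ (Fin n)) :
    pderiv' (fun y => c * f y) i x = c * pderiv' f i x := by
  change fderiv ℝ (c • f) x _ = _
  rw [fderiv_const_smul_field]
  rfl

theorem pderiv'_one_add_norm_sq_rpow (p : ℝ) (i : Fin n) (x : EuclideanSpace ℝ (Fin n)) :
    pderiv' (fun y => (1 + ‖y‖ ^ 2) ^ p) i x = 2 * p * (1 + ‖x‖ ^ 2) ^ (p - 1) * x i := by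
  rw [pderiv', (hasFDerivAt_one_add_norm_sq_rpow p x).fderiv]
  simp only [smul_apply, innerSL_apply_apply, EuclideanSpace.inner_single_right, conj_trivial,
    one_mul, smul_eq_mul, nsmul_eq_mul, Nat.cast_ofNat]
  ring

theorem pderiv'_one_add_norm_sq_rpow_mul_coord (q : ℝ) (i : Fin n)
    (x : EuclideanSpace ℝ (Fin n)) :
    pderiv' (fun y => (1 + ‖y‖ ^ 2) ^ q * y i) i x
      = (1 + ‖x‖ ^ 2) ^ (q - 1) * (1 + ‖x‖ ^ 2 + 2 * q * x i ^ 2) := by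
  have hderiv :
      HasFDerivAt (fun y : EuclideanSpace ℝ (Fin n) => (1 + ‖y‖ ^ 2) ^ q * y i) _ x :=
    (hasFDerivAt_one_add_norm_sq_rpow q x).mul (EuclideanSpace.proj (𝕜 := ℝ) i).hasFDerivAt
  rw [pderiv', hderiv.fderiv]
  simp only [add_apply, smul_apply, innerSL_apply_apply, EuclideanSpace.inner_single_right,
    EuclideanSpace.proj, PiLp.proj_apply, PiLp.single_eq_same, conj_trivial, one_mul, mul_one,
    smul_eq_mul, nsmul_eq_mul, Nat.cast_ofNat]
  rw [← sub_add_cancel q 1, rpow_add_one (by positivity), sub_add_cancel]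
  ring

theorem sum_pderiv'_one_add_norm_sq_rpow_mul_coord (q : ℝ) (x : EuclideanSpace ℝ (Fin n)) :
    ∑ i : Fin n, pderiv' (fun y => (1 + ‖y‖ ^ 2) ^ q * y i) i x
      = (1 + ‖x‖ ^ 2) ^ (q - 1) * (n * (1 + ‖x‖ ^ 2) + 2 * q * ‖x‖ ^ 2) := by
  simp only [pderiv'_one_add_norm_sq_rpow_mul_coord, ← Finset.mul_sum, Finset.sum_add_distrib,
    Finset.sum_const, Finset.card_univ, Fintype.card_fin, nsmul_eq_mul,
    EuclideanSpace.real_norm_sq_eq x]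
  ring

/-- For `n ≥ 4`, `h(x) = (1+|x|²)^{-(2n-5)/2}` and `σ(x) = (1+|x|²)^{(n-3)/2}`
satisfy `σ · div(h ∇σ) ≥ 0` on `ℝⁿ`. -/
theorem sigma_div_h_grad_sigma_nonneg (n : ℕ) (hn : 4 ≤ n) :
    let h : EuclideanSpace ℝ (Fin n) → ℝ :=
      fun x => (1 + ‖x‖ ^ 2) ^ (-(2 * (n : ℝ) - 5) / 2)
    let σ : EuclideanSpace ℝ (Fin n) → ℝ :=
      fun x => (1 + ‖x‖ ^ 2) ^ (((n : ℝ) - 3) / 2)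
    ∀ x : EuclideanSpace ℝ (Fin n),
      0 ≤ σ x * ∑ i : Fin n, pderiv' (fun y => h y * pderiv' σ i y) i x := by
  intro h σ x
  have h_mul_grad_σ (i : Fin n) : (fun y => h y * pderiv' σ i y)
      = fun y => ((n : ℝ) - 3) * ((1 + ‖y‖ ^ 2) ^ (-(n : ℝ) / 2) * y i) := by
    funext y
    have hexp : h y * (1 + ‖y‖ ^ 2) ^ (((n : ℝ) - 3) / 2 - 1)
        = (1 + ‖y‖ ^ 2) ^ (-(n : ℝ) / 2) := by
      rw [← rpow_add (by positivity)]
      ring_nf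
    rw [pderiv'_one_add_norm_sq_rpow, ← hexp]
    ring
  have hdiv : (n : ℝ) * (1 + ‖x‖ ^ 2) + 2 * (-(n : ℝ) / 2) * ‖x‖ ^ 2 = n := by ring
  simp only [h_mul_grad_σ, pderiv'_const_mul, ← Finset.mul_sum,
    sum_pderiv'_one_add_norm_sq_rpow_mul_coord, hdiv]
  have hn3 : (0 : ℝ) ≤ n - 3 := by
    have : (4 : ℝ) ≤ n := by exact_mod_cast hn
    linarith
  have hσ : 0 ≤ σ x := by positivity
  have hpow : 0 ≤ (1 + ‖x‖ ^ 2) ^ (-(n : ℝ) / 2 - 1) := by positivity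
  exact mul_nonneg hσ (mul_nonneg hn3 (mul_nonneg hpow n.cast_nonneg))
end

section
/- Let t > |s| for real constants t, s, and let a(x₁) = t·tanh(x₁) + s. Then lim_{R→∞} ∫_{-R}^{R} e^{-∫₀^{x₁} a(r)dr} dx₁ < ∞, i.e. the function x₁ ↦ e^{-∫₀^{x₁} a(r)dr} is integrable over ℝ. -/
/-!
Since `tanh` is the derivative of `log ∘ cosh`, the exponent is `t log (cosh x) + s x`, and
`cosh x ≥ e^{|x|} / 2` bounds the integrand by `2^t e^{-(t - |s|)|x|}`, which is integrable
because `t > |s|`.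
-/

open Real Filter MeasureTheory intervalIntegral

namespace Real

theorem continuous_tanh : Continuous tanh := by
  simp only [funext tanh_eq_sinh_div_cosh]
  exact continuous_sinh.div continuous_cosh fun x => (cosh_pos x).ne'

theorem hasDerivAt_log_cosh (x : ℝ) : HasDerivAt (fun y => log (cosh y)) (tanh x) x := by
  simpa [tanh_eq_sinh_div_cosh] using (hasDerivAt_cosh x).log (cosh_pos x).ne'

theorem integral_tanh (a b : ℝ) : ∫ r in a..b, tanh r = log (cosh b) - log (cosh a) :=
  integral_eq_sub_of_hasDerivAt (fun x _ => hasDerivAt_log_cosh x)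
    (continuous_tanh.intervalIntegrable a b)

theorem abs_sub_log_two_le_log_cosh (x : ℝ) : |x| - log 2 ≤ log (cosh x) := by
  have h : exp |x| / 2 ≤ cosh x := by
    rw [cosh_eq]
    gcongr
    exact exp_abs_le x
  have := log_le_log (by positivity) h
  rwa [log_div (exp_ne_zero _) two_ne_zero, log_exp] at this

end Real

theorem integral_mul_tanh_add_const (t s x : ℝ) :
    ∫ r in (0 : ℝ)..x, (t * tanh r + s) = t * log (cosh x) + s * x := by
  rw [integral_add ((continuous_tanh.intervalIntegrable 0 x).const_mul t) intervalIntegrable_const,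
    intervalIntegral.integral_const_mul, integral_tanh, intervalIntegral.integral_const]
  simp [mul_comm]

theorem integrable_exp_neg_mul_abs {c : ℝ} (hc : 0 < c) :
    Integrable fun x : ℝ => exp (-(c * |x|)) := by
  rw [← integrableOn_univ, ← Set.Iic_union_Ioi (a := (0 : ℝ))]
  refine IntegrableOn.union ?_ ?_
  · refine (integrableOn_exp_mul_Iic hc 0).congr_fun (fun x hx => ?_) measurableSet_Iic
    simp only [abs_of_nonpos (Set.mem_Iic.mp hx), mul_neg, neg_neg]
  · refine (integrableOn_exp_mul_Ioi (neg_lt_zero.mpr hc) 0).congr_fun (fun x hx => ?_)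
      measurableSet_Ioi
    simp only [abs_of_pos (Set.mem_Ioi.mp hx), neg_mul]

theorem exp_neg_mul_log_cosh_add_le {t : ℝ} (ht : 0 ≤ t) (s x : ℝ) :
    exp (-(t * log (cosh x) + s * x)) ≤ exp (t * log 2) * exp (-((t - |s|) * |x|)) := by
  rw [← exp_add, exp_le_exp]
  have hcosh := mul_le_mul_of_nonneg_left (abs_sub_log_two_le_log_cosh x) ht
  have hsx : -(|s| * |x|) ≤ s * x := by
    simpa only [abs_mul] using neg_abs_le (s * x)
  linarith

theorem integrable_exp_neg_mul_log_cosh_add {t s : ℝ} (hts : |s| < t) :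
    Integrable fun x : ℝ => exp (-(t * log (cosh x) + s * x)) := by
  refine ((integrable_exp_neg_mul_abs (sub_pos.mpr hts)).const_mul (exp (t * log 2))).mono'
    (by fun_prop) ?_
  filter_upwards with x
  rw [norm_of_nonneg (exp_pos _).le]
  exact exp_neg_mul_log_cosh_add_le ((abs_nonneg s).trans hts.le) s x

/-- For `a(x₁) = t·tanh(x₁) + s` with `t > |s|`, the function
`x₁ ↦ e^{-∫₀^{x₁} a}` is integrable over `ℝ`, and the symmetric integrals
`∫_{-R}^{R}` converge to the (finite) full integral as `R → ∞`. -/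
theorem exp_neg_int_tanh_advection (t s : ℝ) (hts : |s| < t) :
    let a : ℝ → ℝ := fun r => t * Real.tanh r + s
    Integrable (fun x : ℝ => Real.exp (-(∫ r in (0 : ℝ)..x, a r))) ∧
    Tendsto (fun R : ℝ =>
        ∫ x in (-R)..R, Real.exp (-(∫ r in (0 : ℝ)..x, a r)))
      atTop (nhds (∫ x : ℝ, Real.exp (-(∫ r in (0 : ℝ)..x, a r)))) := by
  intro a
  have hint : Integrable fun x : ℝ => exp (-(∫ r in (0 : ℝ)..x, a r)) := by
    simpa only [a, integral_mul_tanh_add_const] using integrable_exp_neg_mul_log_cosh_add hts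
  exact ⟨hint, intervalIntegral_tendsto_integral hint tendsto_neg_atTop_atBot tendsto_id⟩
end

section
/- Let γ, λ : ℝⁿ → ℝ be smooth with γ > 0, let f : ℝ → ℝ be C¹, and let u be a smooth solution of -div(γ∇u) = λ·f(u) on ℝⁿ. Suppose there exists a smooth function v > 0 satisfying the linearized equation -div(γ∇v) = λ·f'(u)·v on ℝⁿ. Then for every compactly supported C¹ function ψ on ℝⁿ, ∫_{ℝⁿ} λ·f'(u)·ψ² dx ≤ ∫_{ℝⁿ} γ·|∇ψ|² dx. -/
open Real MeasureTheory

lemma aux_lipschitz {E : Type*} [NormedAddCommGroup E] [NormedSpace ℝ E]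
    (g : E → ℝ) (hg : ContDiff ℝ 1 g) (hgc : HasCompactSupport g) :
    ∃ C : NNReal, LipschitzWith C g := by
  have hfd : Continuous (fderiv ℝ g) := hg.continuous_fderiv one_ne_zero
  have hcs : HasCompactSupport (fderiv ℝ g) := hgc.fderiv (𝕜 := ℝ)
  obtain ⟨C, hC⟩ := hcs.exists_bound_of_continuous hfd
  refine ⟨⟨max C 0, le_max_right _ _⟩, lipschitzWith_of_nnnorm_fderiv_le
    (hg.differentiable one_ne_zero) fun x => ?_⟩
  change ‖fderiv ℝ g x‖ ≤ max C 0
  exact (hC x).trans (le_max_left _ _)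

lemma integral_fderiv_apply_eq_zero {E : Type*} [NormedAddCommGroup E] [NormedSpace ℝ E]
    [MeasurableSpace E] [BorelSpace E] [FiniteDimensional ℝ E]
    (μ : Measure E) [μ.IsAddHaarMeasure]
    (g : E → ℝ) (hg : ContDiff ℝ 1 g) (hgc : HasCompactSupport g) (w : E) :
    ∫ x, fderiv ℝ g x w ∂μ = 0 := by
  obtain ⟨C, hC⟩ := aux_lipschitz g hg hgc
  have h := LipschitzWith.integral_lineDeriv_mul_eq (f := fun _ : E => (1:ℝ)) (C := 0)
    (g := g) (μ := μ) (LipschitzWith.const' (K := 0) 1) hC hgc (-w)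
  simp only [mul_one, neg_neg] at h
  have heq : ∀ x, lineDeriv ℝ g x w = fderiv ℝ g x w := fun x =>
    ((hg.differentiable one_ne_zero x).hasFDerivAt.hasLineDerivAt w).lineDeriv
  have h0 : ∀ x : E, lineDeriv ℝ (fun _ : E => (1:ℝ)) x (-w) = 0 := fun x => by
    have : HasLineDerivAt ℝ (fun _ : E => (1:ℝ)) 0 x (-w) :=
      (hasFDerivAt_const (1:ℝ) x).hasLineDerivAt (-w)
    simpa using this.lineDeriv
  simp only [h0, zero_mul, integral_zero] at h
  calc ∫ x, fderiv ℝ g x w ∂μ = ∫ x, lineDeriv ℝ g x w ∂μ :=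
        integral_congr_ae (Filter.Eventually.of_forall fun x => (heq x).symm)
    _ = 0 := h.symm

lemma pderiv'_mul {n : ℕ} {F G : EuclideanSpace ℝ (Fin n) → ℝ}
    {x : EuclideanSpace ℝ (Fin n)} (hF : DifferentiableAt ℝ F x)
    (hG : DifferentiableAt ℝ G x) (i : Fin n) :
    pderiv' (fun y => F y * G y) i x = pderiv' F i x * G x + F x * pderiv' G i x := by
  simp only [pderiv', fderiv_fun_mul hF hG, ContinuousLinearMap.add_apply,
    ContinuousLinearMap.coe_smul', Pi.smul_apply, smul_eq_mul]
  ring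

lemma pderiv'_continuous {n : ℕ} {g : EuclideanSpace ℝ (Fin n) → ℝ}
    (hg : ContDiff ℝ 1 g) (i : Fin n) : Continuous (pderiv' g i) :=
  (hg.continuous_fderiv one_ne_zero).clm_apply continuous_const

lemma pderiv'_contDiff {n : ℕ} {g : EuclideanSpace ℝ (Fin n) → ℝ}
    (hg : ContDiff ℝ (⊤ : ℕ∞) g) (i : Fin n) : ContDiff ℝ (⊤ : ℕ∞) (pderiv' g i) :=
  (hg.fderiv_right (by simp)).clm_apply contDiff_const

lemma pderiv'_support {n : ℕ} {g : EuclideanSpace ℝ (Fin n) → ℝ}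
    (hgc : HasCompactSupport g) (i : Fin n) : HasCompactSupport (pderiv' g i) :=
  hgc.fderiv_apply (𝕜 := ℝ) _

/-- Integration by parts on `ℝⁿ`. -/
lemma integral_pderiv_mul {n : ℕ} (F G : EuclideanSpace ℝ (Fin n) → ℝ)
    (hF : ContDiff ℝ (⊤ : ℕ∞) F) (hG : ContDiff ℝ 1 G) (hGc : HasCompactSupport G) (i : Fin n) :
    ∫ x, pderiv' F i x * G x = -∫ x, F x * pderiv' G i x := by
  have hF1 : ContDiff ℝ 1 F := hF.of_le (by simp)
  have hFG : ContDiff ℝ 1 fun y => F y * G y := hF1.mul hG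
  have hFGc : HasCompactSupport fun y => F y * G y := hGc.mul_left
  have h0 := integral_fderiv_apply_eq_zero volume (fun y => F y * G y) hFG hFGc
    (EuclideanSpace.single i (1 : ℝ))
  have hrw : ∀ x, fderiv ℝ (fun y => F y * G y) x (EuclideanSpace.single i (1 : ℝ)) =
      pderiv' F i x * G x + F x * pderiv' G i x := fun x =>
    pderiv'_mul (hF1.differentiable one_ne_zero x) (hG.differentiable one_ne_zero x) i
  rw [integral_congr_ae (Filter.Eventually.of_forall hrw)] at h0
  have int1 : Integrable (fun x => pderiv' F i x * G x) :=
    ((pderiv'_continuous hF1 i).mul hG.continuous).integrable_of_hasCompactSupport hGc.mul_left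
  have int2 : Integrable (fun x => F x * pderiv' G i x) :=
    (hF1.continuous.mul (pderiv'_continuous hG i)).integrable_of_hasCompactSupport
      (pderiv'_support hGc i).mul_left
  rw [integral_add int1 int2] at h0
  linarith

/-- Pointwise stability implies stability: if `u` solves
`-div(γ∇u) = λ f(u)` on `ℝⁿ` and some `v > 0` solves the linearized equation
`-div(γ∇v) = λ f'(u) v`, then for every compactly supported `C¹` function `ψ`,
`∫ λ f'(u) ψ² ≤ ∫ γ |∇ψ|²`. -/
theorem pointwise_stable_implies_stable (n : ℕ)
    (γ lam : EuclideanSpace ℝ (Fin n) → ℝ) (hγ : ContDiff ℝ (⊤ : ℕ∞) γ)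
    (hlam : ContDiff ℝ (⊤ : ℕ∞) lam) (hγpos : ∀ x, 0 < γ x)
    (f : ℝ → ℝ) (hf : ContDiff ℝ 1 f)
    (u : EuclideanSpace ℝ (Fin n) → ℝ) (hu : ContDiff ℝ (⊤ : ℕ∞) u)
    (hueq : ∀ x, -(∑ i : Fin n, pderiv' (fun y => γ y * pderiv' u i y) i x) =
      lam x * f (u x))
    (v : EuclideanSpace ℝ (Fin n) → ℝ) (hv : ContDiff ℝ (⊤ : ℕ∞) v)
    (hvpos : ∀ x, 0 < v x)
    (hveq : ∀ x, -(∑ i : Fin n, pderiv' (fun y => γ y * pderiv' v i y) i x) =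
      lam x * deriv f (u x) * v x)
    (ψ : EuclideanSpace ℝ (Fin n) → ℝ) (hψ : ContDiff ℝ 1 ψ)
    (hψc : HasCompactSupport ψ) :
    (∫ x, lam x * deriv f (u x) * (ψ x) ^ 2) ≤
      ∫ x, γ x * ∑ i : Fin n, (pderiv' ψ i x) ^ 2 := by
  have hv1 : ContDiff ℝ 1 v := hv.of_le (by simp)
  have hγ1 : ContDiff ℝ 1 γ := hγ.of_le (by simp)
  set w : EuclideanSpace ℝ (Fin n) → ℝ := fun x => ψ x ^ 2 / v x with hw_def
  have hvne : ∀ x, v x ≠ 0 := fun x => (hvpos x).ne'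
  have hw : ContDiff ℝ 1 w := (hψ.pow 2).div hv1 hvne
  have hwc : HasCompactSupport w := by
    apply hψc.mono
    intro x hx
    simp only [Function.mem_support, hw_def] at hx ⊢
    intro h
    apply hx
    simp [h]
  -- abbreviation for F i
  have hFi : ∀ i : Fin n, ContDiff ℝ (⊤ : ℕ∞) fun y => γ y * pderiv' v i y :=
    fun i => hγ.mul (pderiv'_contDiff hv i)
  have hFi1 : ∀ i : Fin n, ContDiff ℝ 1 fun y => γ y * pderiv' v i y :=
    fun i => (hFi i).of_le (by simp)
  have intA : ∀ i : Fin n, Integrable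
      (fun x => pderiv' (fun y => γ y * pderiv' v i y) i x * w x) := fun i =>
    ((pderiv'_continuous (hFi1 i) i).mul hw.continuous).integrable_of_hasCompactSupport
      hwc.mul_left
  have intB : ∀ i : Fin n, Integrable
      (fun x => (γ x * pderiv' v i x) * pderiv' w i x) := fun i =>
    ((hFi1 i).continuous.mul (pderiv'_continuous hw i)).integrable_of_hasCompactSupport
      (pderiv'_support hwc i).mul_left
  have stepA : ∀ i : Fin n,
      ∫ x, pderiv' (fun y => γ y * pderiv' v i y) i x * w x =
        -∫ x, (γ x * pderiv' v i x) * pderiv' w i x := fun i =>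
    integral_pderiv_mul _ w (hFi i) hw hwc i
  have hpt : ∀ x, lam x * deriv f (u x) * (ψ x) ^ 2 =
      -((∑ i : Fin n, pderiv' (fun y => γ y * pderiv' v i y) i x) * w x) := by
    intro x
    have h := hveq x
    have : (∑ i : Fin n, pderiv' (fun y => γ y * pderiv' v i y) i x) =
        -(lam x * deriv f (u x) * v x) := by linarith
    rw [this, hw_def]
    field_simp
    rw [eq_div_iff (hvne x)]
  -- pointwise inequality
  have hptineq : ∀ x, (∑ i : Fin n, (γ x * pderiv' v i x) * pderiv' w i x) ≤
      γ x * ∑ i : Fin n, (pderiv' ψ i x) ^ 2 := by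
    intro x
    rw [Finset.mul_sum]
    apply Finset.sum_le_sum
    intro i _
    have hdψ : DifferentiableAt ℝ ψ x := hψ.differentiable one_ne_zero x
    have hdv : DifferentiableAt ℝ v x := hv.differentiable (by simp) x
    have hdw : DifferentiableAt ℝ w x := hw.differentiable one_ne_zero x
    have e1 : (fun y => w y * v y) = fun y => ψ y * ψ y := by
      funext y
      simp only [hw_def]
      field_simp
      rw [mul_div_assoc, div_self (hvne y), mul_one]
    have e2 := pderiv'_mul hdw hdv i
    have e3 := pderiv'_mul hdψ hdψ i
    rw [e1, e3] at e2
    -- e2 : pderiv' ψ i x * ψ x + ψ x * pderiv' ψ i x = pderiv' w i x * v x + w x * pderiv' v i x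
    have hwx : w x = ψ x ^ 2 / v x := by simp [hw_def]
    have hDw : pderiv' w i x =
        (2 * ψ x * pderiv' ψ i x - (ψ x ^ 2 / v x) * pderiv' v i x) / v x := by
      rw [eq_div_iff (hvne x)]
      rw [hwx] at e2
      linarith
    have key : γ x * (pderiv' ψ i x) ^ 2 - (γ x * pderiv' v i x) * pderiv' w i x =
        γ x * (pderiv' ψ i x - ψ x * pderiv' v i x / v x) ^ 2 := by
      rw [hDw]
      field_simp
      ring
    nlinarith [mul_nonneg (hγpos x).le (sq_nonneg (pderiv' ψ i x - ψ x * pderiv' v i x / v x))]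
  have intL : Integrable (fun x => ∑ i : Fin n, (γ x * pderiv' v i x) * pderiv' w i x) :=
    integrable_finset_sum _ fun i _ => intB i
  have intR : Integrable (fun x => γ x * ∑ i : Fin n, (pderiv' ψ i x) ^ 2) := by
    apply Continuous.integrable_of_hasCompactSupport
    · exact hγ1.continuous.mul (continuous_finset_sum _ fun i _ => (pderiv'_continuous hψ i).pow 2)
    · apply HasCompactSupport.mul_left
      apply (hψc.fderiv (𝕜 := ℝ)).mono
      intro x hx
      simp only [Function.mem_support] at hx ⊢
      intro h
      apply hx
      apply Finset.sum_eq_zero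
      intro i _
      simp [pderiv', h]
  calc (∫ x, lam x * deriv f (u x) * (ψ x) ^ 2)
      = ∫ x, -((∑ i : Fin n, pderiv' (fun y => γ y * pderiv' v i y) i x) * w x) :=
        integral_congr_ae (Filter.Eventually.of_forall hpt)
    _ = -∫ x, (∑ i : Fin n, pderiv' (fun y => γ y * pderiv' v i y) i x) * w x :=
        integral_neg _
    _ = -∫ x, ∑ i : Fin n, pderiv' (fun y => γ y * pderiv' v i y) i x * w x := by
        simp_rw [Finset.sum_mul]
    _ = -∑ i : Fin n, ∫ x, pderiv' (fun y => γ y * pderiv' v i y) i x * w x := by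
        rw [integral_finset_sum _ fun i _ => intA i]
    _ = -∑ i : Fin n, -∫ x, (γ x * pderiv' v i x) * pderiv' w i x := by
        congr 1
        exact Finset.sum_congr rfl fun i _ => stepA i
    _ = ∑ i : Fin n, ∫ x, (γ x * pderiv' v i x) * pderiv' w i x := by
        rw [Finset.sum_neg_distrib, neg_neg]
    _ = ∫ x, ∑ i : Fin n, (γ x * pderiv' v i x) * pderiv' w i x :=
        (integral_finset_sum _ fun i _ => intB i).symm
    _ ≤ ∫ x, γ x * ∑ i : Fin n, (pderiv' ψ i x) ^ 2 :=
        integral_mono intL intR hptineq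
end

section
/- Let R₀ > e^{3/4} and define σ : [0,∞) → ℝ by σ(r) = log R₀ + r²/R₀² − r⁴/(4R₀⁴) − 3/4 for r < R₀, and σ(r) = log r for r ≥ R₀. Then the radial function x ↦ σ(|x|) on ℝ² is C¹, satisfies σ·Δσ ≥ 0 on ℝ² (with h ≡ 1), is nonconstant, and satisfies ∫_{B_{2R}\B_R} σ(|x|)² dx ≤ C·R²·(log R)² for all R ≥ 2 and some constant C. -/
open Real MeasureTheory

section RadialLaplacian

variable {n : ℕ} {g g' g'' : ℝ → ℝ}

theorem hasFDerivAt_comp_norm_sq {x : EuclideanSpace ℝ (Fin n)}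
    (hg : HasDerivAt g (g' (‖x‖ ^ 2)) (‖x‖ ^ 2)) :
    HasFDerivAt (fun y : EuclideanSpace ℝ (Fin n) => g (‖y‖ ^ 2))
      (g' (‖x‖ ^ 2) • (2 • innerSL ℝ x)) x :=
  hg.comp_hasFDerivAt x (hasStrictFDerivAt_norm_sq x).hasFDerivAt

theorem pderiv'_comp_norm_sq (hg : ∀ s, HasDerivAt g (g' s) s) (i : Fin n) :
    pderiv' (fun y => g (‖y‖ ^ 2)) i = fun x => 2 * g' (‖x‖ ^ 2) * x i := by
  ext x
  simp only [pderiv', (hasFDerivAt_comp_norm_sq (hg _)).fderiv, smul_apply, coe_innerSL_apply,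
    EuclideanSpace.inner_single_right, ringHom_apply, one_mul, nsmul_eq_mul, Nat.cast_ofNat,
    smul_eq_mul]
  ring

theorem sum_pderiv'_pderiv'_comp_norm_sq (hg : ∀ s, HasDerivAt g (g' s) s)
    (hg' : ∀ s, HasDerivAt g' (g'' s) s) (x : EuclideanSpace ℝ (Fin n)) :
    ∑ i, pderiv' (pderiv' (fun y => g (‖y‖ ^ 2)) i) i x =
      2 * n * g' (‖x‖ ^ 2) + 4 * ‖x‖ ^ 2 * g'' (‖x‖ ^ 2) := by
  have hpderiv2 : ∀ i, pderiv' (pderiv' (fun y => g (‖y‖ ^ 2)) i) i x =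
      2 * g' (‖x‖ ^ 2) + 4 * g'' (‖x‖ ^ 2) * x i ^ 2 := by
    intro i
    have hprod : HasFDerivAt (fun y : EuclideanSpace ℝ (Fin n) => 2 * g' (‖y‖ ^ 2) * y i)
        ((2 * g' (‖x‖ ^ 2)) • EuclideanSpace.proj i +
          x i • (2 : ℝ) • g'' (‖x‖ ^ 2) • 2 • innerSL ℝ x) x :=
      ((hasFDerivAt_comp_norm_sq (hg' _)).const_mul 2).mul
        (EuclideanSpace.proj (𝕜 := ℝ) (ι := Fin n) i).hasFDerivAt
    rw [pderiv'_comp_norm_sq hg, pderiv', hprod.fderiv]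
    simp only [add_apply, smul_apply, PiLp.proj_apply, PiLp.single_eq_same, smul_eq_mul, mul_one,
      coe_innerSL_apply, EuclideanSpace.inner_single_right, ringHom_apply, nsmul_eq_mul,
      Nat.cast_ofNat]
    ring
  rw [Finset.sum_congr rfl fun i _ => hpderiv2 i, Finset.sum_add_distrib, Finset.sum_const,
    ← Finset.mul_sum, ← EuclideanSpace.real_norm_sq_eq]
  simp only [Finset.card_univ, Fintype.card_fin, nsmul_eq_mul]
  ring

end RadialLaplacian

theorem hasDerivAt_ite_lt {u v u' v' : ℝ → ℝ} {a : ℝ}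
    (hu : ∀ s ≤ a, HasDerivAt u (u' s) s) (hv : ∀ s, a ≤ s → HasDerivAt v (v' s) s)
    (hval : u a = v a) (hder : u' a = v' a) (s : ℝ) :
    HasDerivAt (fun t => if t < a then u t else v t) (if s < a then u' s else v' s) s := by
  rcases lt_trichotomy s a with hlt | rfl | hgt
  · have hloc : (fun t => if t < a then u t else v t) =ᶠ[nhds s] u :=
      Filter.eventually_of_mem (Iio_mem_nhds hlt) fun t ht => if_pos ht
    simpa [hlt] using (hu s hlt.le).congr_of_eventuallyEq hloc
  · have hleft : HasDerivWithinAt (fun t => if t < s then u t else v t) (v' s) (Set.Iic s) s :=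
      hder ▸ (hu s le_rfl).hasDerivWithinAt.congr
        (fun t ht => by
          rcases (Set.mem_Iic.mp ht).lt_or_eq with h | rfl
          · simp [h]
          · simp [hval])
        (by simp [hval])
    have hright : HasDerivWithinAt (fun t => if t < s then u t else v t) (v' s) (Set.Ici s) s :=
      (hv s le_rfl).hasDerivWithinAt.congr (fun t ht => if_neg (not_lt.mpr ht)) (by simp)
    simpa [Set.Iic_union_Ici] using hleft.union hright
  · have hloc : (fun t => if t < a then u t else v t) =ᶠ[nhds s] v :=
      Filter.eventually_of_mem (Ioi_mem_nhds hgt) fun t ht => if_neg (not_lt.mpr (le_of_lt ht))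
    simpa [not_lt.mpr hgt.le] using (hv s hgt.le).congr_of_eventuallyEq hloc

theorem contDiff_one_of_hasDerivAt {g g' : ℝ → ℝ} (hg : ∀ s, HasDerivAt g (g' s) s)
    (hg' : Continuous g') : ContDiff ℝ 1 g :=
  contDiff_one_iff_deriv.mpr ⟨fun s => (hg s).differentiableAt,
    (funext fun s => (hg s).deriv) ▸ hg'⟩

theorem setIntegral_annulus_sq_le {f : EuclideanSpace ℝ (Fin 2) → ℝ} {R M : ℝ} (hR : 0 ≤ R)
    (hf : ∀ x : EuclideanSpace ℝ (Fin 2), ‖x‖ < 2 * R → |f x| ≤ M) :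
    ∫ x in Metric.ball 0 (2 * R) \ Metric.ball 0 R, f x ^ 2 ≤ 4 * π * M ^ 2 * R ^ 2 := by
  set S := Metric.ball (0 : EuclideanSpace ℝ (Fin 2)) (2 * R) \ Metric.ball 0 R
  have hsq : ∀ x ∈ S, ‖f x ^ 2‖ ≤ M ^ 2 := fun x hx => by
    have hx' : ‖x‖ < 2 * R := by simpa using hx.1
    rw [norm_pow, Real.norm_eq_abs]
    exact pow_le_pow_left₀ (abs_nonneg _) (hf x hx') 2
  have hvol : volume.real S ≤ π * (2 * R) ^ 2 := by
    calc volume.real S ≤ volume.real (Metric.ball (0 : EuclideanSpace ℝ (Fin 2)) (2 * R)) :=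
          measureReal_mono Set.sdiff_subset measure_ball_lt_top.ne
      _ = π * (2 * R) ^ 2 := by
          simp [Measure.real, ENNReal.toReal_ofReal (by positivity : (0 : ℝ) ≤ R * 2),
            pi_pos.le, mul_comm]
  calc ∫ x in S, f x ^ 2 ≤ ‖∫ x in S, f x ^ 2‖ := le_norm_self _
    _ ≤ M ^ 2 * volume.real S := norm_setIntegral_le_of_norm_le_const
        ((measure_mono Set.sdiff_subset).trans_lt measure_ball_lt_top) hsq
    _ ≤ M ^ 2 * (π * (2 * R) ^ 2) := by gcongr
    _ = 4 * π * M ^ 2 * R ^ 2 := by ring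

/-- `σ(r) = moschiniProfile R₀ (r ^ 2)`: a profile in `r²` composes smoothly with `‖x‖ ^ 2`,
whereas the norm itself is not differentiable at the origin. -/
noncomputable def moschiniProfile (R₀ s : ℝ) : ℝ :=
  if s < R₀ ^ 2 then log R₀ + s / R₀ ^ 2 - s ^ 2 / (4 * R₀ ^ 4) - 3 / 4 else log s / 2

noncomputable def moschiniProfileDeriv (R₀ s : ℝ) : ℝ :=
  if s < R₀ ^ 2 then 1 / R₀ ^ 2 - s / (2 * R₀ ^ 4) else 1 / (2 * s)

noncomputable def moschiniProfileDeriv2 (R₀ s : ℝ) : ℝ :=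
  if s < R₀ ^ 2 then -(1 / (2 * R₀ ^ 4)) else -(1 / (2 * s ^ 2))

section MoschiniProfile

variable {R₀ : ℝ}

theorem moschiniProfile_sq (hR₀ : 0 < R₀) {r : ℝ} (hr : 0 ≤ r) :
    moschiniProfile R₀ (r ^ 2) =
      if r < R₀ then log R₀ + r ^ 2 / R₀ ^ 2 - r ^ 4 / (4 * R₀ ^ 4) - 3 / 4 else log r := by
  have hiff : r ^ 2 < R₀ ^ 2 ↔ r < R₀ := pow_lt_pow_iff_left₀ hr hR₀.le two_ne_zero
  unfold moschiniProfile
  split_ifs with h h' h'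
  · ring
  · exact absurd (hiff.mp h) h'
  · exact absurd (hiff.mpr h') h
  · rw [log_pow]; push_cast; ring

theorem hasDerivAt_moschiniProfile (hR₀ : R₀ ≠ 0) (s : ℝ) :
    HasDerivAt (moschiniProfile R₀) (moschiniProfileDeriv R₀ s) s := by
  unfold moschiniProfile moschiniProfileDeriv
  refine hasDerivAt_ite_lt (u' := fun s => 1 / R₀ ^ 2 - s / (2 * R₀ ^ 4))
    (v' := fun s => 1 / (2 * s)) (fun s _ => ?_) (fun s hs => ?_) ?_ ?_ s
  · exact ((((hasDerivAt_id' s).div_const (R₀ ^ 2)).const_add (log R₀)).sub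
      ((hasDerivAt_pow 2 s).div_const (4 * R₀ ^ 4))).sub_const (3 / 4)
      |>.congr_deriv (by field_simp; ring)
  · have hs0 : s ≠ 0 := (lt_of_lt_of_le (by positivity) hs).ne'
    exact ((hasDerivAt_log hs0).div_const 2).congr_deriv (by field_simp)
  · rw [log_pow]
    field_simp
    ring
  · field_simp
    ring

theorem hasDerivAt_moschiniProfileDeriv (hR₀ : R₀ ≠ 0) (s : ℝ) :
    HasDerivAt (moschiniProfileDeriv R₀) (moschiniProfileDeriv2 R₀ s) s := by
  unfold moschiniProfileDeriv moschiniProfileDeriv2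
  refine hasDerivAt_ite_lt (u' := fun _ => -(1 / (2 * R₀ ^ 4)))
    (v' := fun s => -(1 / (2 * s ^ 2))) (fun s _ => ?_) (fun s hs => ?_) ?_ ?_ s
  · exact (((hasDerivAt_id' s).div_const (2 * R₀ ^ 4)).const_sub (1 / R₀ ^ 2)).congr_deriv
      (by ring)
  · have hs0 : s ≠ 0 := (lt_of_lt_of_le (by positivity) hs).ne'
    exact ((hasDerivAt_const s 1).div ((hasDerivAt_id' s).const_mul 2)
      (mul_ne_zero two_ne_zero hs0)).congr_deriv (by field_simp; ring)
  · field_simp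
    ring
  · ring

theorem moschiniProfile_nonneg (hR₀ : exp (3 / 4) ≤ R₀) {s : ℝ} (hs : 0 ≤ s) :
    0 ≤ moschiniProfile R₀ s := by
  have hone : 1 < R₀ := (one_lt_exp_iff.mpr (by norm_num)).trans_le hR₀
  have hlog : 3 / 4 ≤ log R₀ := (le_log_iff_exp_le (by linarith)).mpr hR₀
  unfold moschiniProfile
  split_ifs with h
  · have ht : s / R₀ ^ 2 ≤ 1 := (div_le_one (by positivity)).mpr h.le
    have hsq : s ^ 2 / (4 * R₀ ^ 4) = (s / R₀ ^ 2) ^ 2 / 4 := by field_simp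
    nlinarith [div_nonneg hs (by positivity : (0:ℝ) ≤ R₀ ^ 2)]
  · exact div_nonneg (log_nonneg (by nlinarith)) two_pos.le

theorem moschiniProfile_le_max (hR₀ : R₀ ≠ 0) (s : ℝ) :
    moschiniProfile R₀ s ≤ max (log R₀) (log s / 2) := by
  unfold moschiniProfile
  split_ifs with h
  · have ht : s / R₀ ^ 2 ≤ 1 := (div_le_one (by positivity)).mpr h.le
    have hsq : s ^ 2 / (4 * R₀ ^ 4) = (s / R₀ ^ 2) ^ 2 / 4 := by field_simp
    refine le_max_of_le_left ?_
    nlinarith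
  · exact le_max_right _ _

theorem moschiniProfile_laplacian_nonneg (hR₀ : R₀ ≠ 0) (s : ℝ) :
    0 ≤ 4 * moschiniProfileDeriv R₀ s + 4 * s * moschiniProfileDeriv2 R₀ s := by
  unfold moschiniProfileDeriv moschiniProfileDeriv2
  split_ifs with h
  · have : 4 * (1 / R₀ ^ 2 - s / (2 * R₀ ^ 4)) + 4 * s * -(1 / (2 * R₀ ^ 4)) =
        4 * (R₀ ^ 2 - s) / R₀ ^ 4 := by field_simp; ring
    rw [this]
    exact div_nonneg (by linarith) (by positivity)
  · have hs0 : s ≠ 0 := (lt_of_lt_of_le (by positivity) (not_lt.mp h)).ne'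
    rw [show 4 * (1 / (2 * s)) + 4 * s * -(1 / (2 * s ^ 2)) = 0 by field_simp; ring]

theorem abs_moschiniProfile_sq_le (hR₀ : exp (3 / 4) ≤ R₀) {R r : ℝ} (hR : 2 ≤ R) (hr : 0 ≤ r)
    (hrR : r < 2 * R) : |moschiniProfile R₀ (r ^ 2)| ≤ (log R₀ / log 2 + 2) * log R := by
  have hpos : 0 < R₀ := (exp_pos _).trans_le hR₀
  have hlog2 : 0 < log 2 := log_pos one_lt_two
  have hlogR₀ : 0 ≤ log R₀ := log_nonneg ((one_le_exp (by norm_num)).trans hR₀)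
  have hlog2R : log 2 ≤ log R := log_le_log two_pos hR
  rw [abs_of_nonneg (moschiniProfile_nonneg hR₀ (sq_nonneg r))]
  refine (moschiniProfile_le_max hpos.ne' _).trans (max_le ?_ ?_)
  · calc log R₀ = log R₀ / log 2 * log 2 := by field_simp
      _ ≤ (log R₀ / log 2 + 2) * log R := by gcongr; linarith
  · rcases hr.eq_or_lt with rfl | hr
    · simpa using mul_nonneg (by positivity : 0 ≤ log R₀ / log 2 + 2) (hlog2.le.trans hlog2R)
    rw [log_pow]
    calc (2 : ℕ) * log r / 2 = log r := by push_cast; ring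
      _ ≤ log (2 * R) := log_le_log hr hrR.le
      _ = log 2 + log R := log_mul two_ne_zero (by linarith)
      _ ≤ (log R₀ / log 2 + 2) * log R := by
        nlinarith [div_nonneg hlogR₀ hlog2.le]

end MoschiniProfile

/-- Moschini's example: for `R₀ > e^{3/4}`, the radial function
`σ(r) = log R₀ + r²/R₀² − r⁴/(4R₀⁴) − 3/4` for `r < R₀`, `σ(r) = log r` for
`r ≥ R₀`, viewed on `ℝ²`, is `C¹`, satisfies `σ Δσ ≥ 0`, is nonconstant, and
`∫_{B_{2R}∖B_R} σ² ≤ C R² (log R)²` for all `R ≥ 2`. -/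
theorem moschini_example (R₀ : ℝ) (hR₀ : Real.exp (3 / 4) < R₀) :
    let F : EuclideanSpace ℝ (Fin 2) → ℝ := fun x =>
      if ‖x‖ < R₀ then
        Real.log R₀ + ‖x‖ ^ 2 / R₀ ^ 2 - ‖x‖ ^ 4 / (4 * R₀ ^ 4) - 3 / 4
      else Real.log ‖x‖
    ContDiff ℝ 1 F ∧
    (∀ x, 0 ≤ F x * ∑ i : Fin 2, pderiv' (pderiv' F i) i x) ∧
    (∃ x y, F x ≠ F y) ∧
    (∃ C : ℝ, ∀ R : ℝ, 2 ≤ R →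
      (∫ x in Metric.ball (0 : EuclideanSpace ℝ (Fin 2)) (2 * R) \
          Metric.ball (0 : EuclideanSpace ℝ (Fin 2)) R, (F x) ^ 2)
        ≤ C * R ^ 2 * (Real.log R) ^ 2) := by
  intro F
  have hpos : 0 < R₀ := (exp_pos _).trans hR₀
  have hF : F = fun x => moschiniProfile R₀ (‖x‖ ^ 2) :=
    funext fun x => (moschiniProfile_sq hpos (norm_nonneg x)).symm
  have hg := hasDerivAt_moschiniProfile hpos.ne'
  have hg' := hasDerivAt_moschiniProfileDeriv hpos.ne'
  refine ⟨?_, fun x => ?_, ⟨0, EuclideanSpace.single 0 R₀, ?_⟩, ?_⟩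
  · rw [hF]
    exact (contDiff_one_of_hasDerivAt hg
      (continuous_iff_continuousAt.mpr fun s => (hg' s).continuousAt)).comp (contDiff_norm_sq ℝ)
  · rw [hF, sum_pderiv'_pderiv'_comp_norm_sq hg hg']
    refine mul_nonneg (moschiniProfile_nonneg hR₀.le (sq_nonneg _)) ?_
    push_cast
    linarith [moschiniProfile_laplacian_nonneg hpos.ne' (‖x‖ ^ 2)]
  · simp [F, hpos, abs_of_pos hpos]
  · refine ⟨4 * π * (log R₀ / log 2 + 2) ^ 2, fun R hR => ?_⟩
    calc _ ≤ 4 * π * ((log R₀ / log 2 + 2) * log R) ^ 2 * R ^ 2 :=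
          setIntegral_annulus_sq_le (by linarith) fun x hx =>
            hF ▸ abs_moschiniProfile_sq_le hR₀.le hR (norm_nonneg x) hx
      _ = _ := by ring
end
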